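/- arXiv:2206.11995 — 2 statements merged into one kernel-verified Lean document; each statement's English description precedes it below -/
import Mathlib

section
/- In the two-value MNL model over menus of size m ≥ 2 (weights v+δ on a top set and v elsewhere), for any finite families of positive reals let Δ = Σ_{S: a,b∈S} δ/w(S) + Σ_{S': a,b∉S'} [ (v+δ)/(w(S')+v+δ) − v/(w(S')+v) ] and τ = Σ_{S: a,b∈S} (v+δ)/w(S) + Σ_{S': a,b∉S'} (v+δ)/(w(S')+v+δ), where each w(S) ≥ m·v, each w(S') ≥ (m−1)·v, and the second family is nonempty; then Δ/τ ≥ (1/2)·δ/(v+δ). -/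
theorem gap_to_score_ratio {ι κ : Type*} (m : ℕ) (hm : 2 ≤ m) (v δ : ℝ)
    (hv : 0 < v) (hδ : 0 < δ)
    (A : Finset ι) (B : Finset κ) (hB : B.Nonempty)
    (wA : ι → ℝ) (wB : κ → ℝ)
    (hwA : ∀ S ∈ A, (m : ℝ) * v ≤ wA S)
    (hwB : ∀ S' ∈ B, ((m : ℝ) - 1) * v ≤ wB S') :
    ((∑ S ∈ A, δ / wA S) +
        ∑ S' ∈ B, ((v + δ) / (wB S' + v + δ) - v / (wB S' + v))) /
      ((∑ S ∈ A, (v + δ) / wA S) + ∑ S' ∈ B, (v + δ) / (wB S' + v + δ)) ≥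
      (1 / 2) * (δ / (v + δ)) := by
  have hvδ : (0:ℝ) < v + δ := by linarith
  have hm' : (2:ℝ) ≤ (m:ℝ) := by exact_mod_cast hm
  set c : ℝ := (1/2) * (δ / (v + δ)) with hc
  have hcpos : 0 < c := by positivity
  -- positivity of wA terms
  have hwApos : ∀ S ∈ A, 0 < wA S := fun S hS => lt_of_lt_of_le (by nlinarith) (hwA S hS)
  have hwBpos : ∀ S' ∈ B, v ≤ wB S' := fun S' hS' =>
    le_trans (by nlinarith) (hwB S' hS')
  -- denominator positivity
  have hτA : 0 ≤ ∑ S ∈ A, (v + δ) / wA S :=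
    Finset.sum_nonneg fun S hS => le_of_lt (div_pos hvδ (hwApos S hS))
  have hτB : 0 < ∑ S' ∈ B, (v + δ) / (wB S' + v + δ) := by
    apply Finset.sum_pos (fun S' hS' => div_pos hvδ (by have := hwBpos S' hS'; linarith)) hB
  have hτ : 0 < (∑ S ∈ A, (v + δ) / wA S) + ∑ S' ∈ B, (v + δ) / (wB S' + v + δ) := by
    linarith
  rw [ge_iff_le, le_div_iff₀ hτ]
  have h1 : ∀ S ∈ A, c * ((v + δ) / wA S) ≤ δ / wA S := by
    intro S hS
    have hw := hwApos S hS
    rw [hc, show 1/2 * (δ/(v+δ)) * ((v+δ)/wA S) = (δ/2)/(wA S) by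
      field_simp]
    gcongr
    linarith
  have h2 : ∀ S' ∈ B, c * ((v + δ) / (wB S' + v + δ)) ≤
      (v + δ) / (wB S' + v + δ) - v / (wB S' + v) := by
    intro S' hS'
    have hw := hwBpos S' hS'
    have h1' : 0 < wB S' + v + δ := by linarith
    have h2' : 0 < wB S' + v := by linarith
    have heq : (v + δ) / (wB S' + v + δ) - v / (wB S' + v)
        = δ * wB S' / ((wB S' + v + δ) * (wB S' + v)) := by
      field_simp; ring
    rw [heq, hc, show 1/2 * (δ/(v+δ)) * ((v+δ)/(wB S' + v + δ))
        = (δ/2)/(wB S' + v + δ) by field_simp,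
      div_le_div_iff₀ (by positivity) (by positivity)]
    nlinarith [mul_pos h1' hδ, mul_le_mul_of_nonneg_left hw (le_of_lt hδ)]
  calc c * ((∑ S ∈ A, (v + δ) / wA S) + ∑ S' ∈ B, (v + δ) / (wB S' + v + δ))
      = (∑ S ∈ A, c * ((v + δ) / wA S)) +
        ∑ S' ∈ B, c * ((v + δ) / (wB S' + v + δ)) := by
        rw [mul_add, Finset.mul_sum, Finset.mul_sum]
    _ ≤ (∑ S ∈ A, δ / wA S) +
        ∑ S' ∈ B, ((v + δ) / (wB S' + v + δ) - v / (wB S' + v)) :=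
        add_le_add (Finset.sum_le_sum h1) (Finset.sum_le_sum h2)
end

section
/- For the two-value MNL model, the KL divergence between the full observation distributions of models M^a and M^b (differing by swapping which of a, b is a top item) is exactly p·R·log((v+δ)/v)·C(n−1, m−1)·Δ_K^{(m)}, where Δ_K^{(m)} = (1/C(n−1,m−1))·(Σ_{S∋a,b} δ/w^a(S) + Σ_{S': a,b∉S'} [(v+δ)/(w^a(S')+v+δ) − v/(w^a(S')+v)]). -/
/-- Probability of observing outcome `y` (`none` = menu not offered, `some i` = item `i`
chosen) from a single menu `S`, under the MNL model with weights `w` and offering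
probability `p`. -/
noncomputable def menuObsProb {n : ℕ} (w : Fin n → ℝ) (p : ℝ) (S : Finset (Fin n)) :
    Option (Fin n) → ℝ
  | none => 1 - p
  | some i => if i ∈ S then p * w i / (∑ j ∈ S, w j) else 0

/-- Likelihood of a full observation record `Y` (one outcome per size-`m` menu per round). -/
noncomputable def jointProb {n m R : ℕ} (w : Fin n → ℝ) (p : ℝ)
    (Y : {S : Finset (Fin n) // S ∈ Finset.powersetCard m Finset.univ} × Fin R →
      Option (Fin n)) : ℝ :=
  ∏ z, menuObsProb w p z.1.val (Y z)

/-! Observations are independent, so the divergence of the joint law is the sum of the divergences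
of the single observations, and the `R` rounds contribute equal terms. For one menu `S` offered
with probability `p` under weights `w` versus `w'`, the divergence is
`p / W(S) * ∑_{i ∈ S} w i * log (w i / w' i) + p * log (W'(S) / W(S))`, where `W(S) = ∑_{i ∈ S} w i`.
With `L = log ((v + δ) / v)`: a menu avoiding `a` and `b` has the same law under both models; a
menu containing both has `W' = W` and contributes `p L δ / W(S)`. The remaining menus come in pairs
`insert a S`, `insert b S` with `a, b ∉ S`, whose log-partition terms `log (W' / W)` are opposite,
leaving `p L ((v + δ) / (W(S) + v + δ) - v / (W(S) + v))`. -/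

open Finset

theorem Fintype.sum_pi_prod_mul_apply {ι α R : Type*} [Fintype ι] [DecidableEq ι] [Fintype α]
    [CommSemiring R] (P : ι → α → R) (hP : ∀ z, ∑ y, P z y = 1) (z₀ : ι) (g : α → R) :
    ∑ Y : ι → α, (∏ z, P z (Y z)) * g (Y z₀) = ∑ y, P z₀ y * g y := by
  set F : ι → α → R := fun z y => P z y * if z = z₀ then g y else 1
  have hF : ∀ Y : ι → α, ∏ z, F z (Y z) = (∏ z, P z (Y z)) * g (Y z₀) := by
    intro Y
    simp only [F, prod_mul_distrib, prod_ite_eq']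
  have hsum : ∀ z, ∑ y, F z y = if z = z₀ then ∑ y, P z₀ y * g y else 1 := by
    intro z
    split_ifs with h
    · subst h; simp [F]
    · simp [F, h, hP]
  calc ∑ Y : ι → α, (∏ z, P z (Y z)) * g (Y z₀)
      = ∑ Y : ι → α, ∏ z, F z (Y z) := by simp only [hF]
    _ = ∏ z, ∑ y, F z y := (Fintype.prod_sum F).symm
    _ = ∑ y, P z₀ y * g y := by simp only [hsum, prod_ite_eq']

-- Terms with `P x = 0` vanish, which is the convention `0 * log 0 = 0`.
noncomputable def discreteKL {α : Type*} [Fintype α] (P Q : α → ℝ) : ℝ :=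
  ∑ x, P x * Real.log (P x / Q x)

theorem discreteKL_self {α : Type*} [Fintype α] (P : α → ℝ) : discreteKL P P = 0 := by
  simp [discreteKL, Real.log_div_self]

theorem discreteKL_pi {ι α : Type*} [Fintype ι] [DecidableEq ι] [Fintype α]
    (P Q : ι → α → ℝ) (hP : ∀ z, ∑ y, P z y = 1) (hQ : ∀ z y, P z y ≠ 0 → Q z y ≠ 0) :
    discreteKL (fun Y : ι → α => ∏ z, P z (Y z)) (fun Y => ∏ z, Q z (Y z)) =
      ∑ z, discreteKL (P z) (Q z) := by
  have hlog : ∀ Y : ι → α, (∏ z, P z (Y z)) * Real.log ((∏ z, P z (Y z)) / ∏ z, Q z (Y z)) =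
      ∑ z, (∏ z', P z' (Y z')) * Real.log (P z (Y z) / Q z (Y z)) := by
    intro Y
    by_cases h : ∀ z, P z (Y z) ≠ 0
    · rw [← prod_div_distrib, Real.log_prod fun z _ => div_ne_zero (h z) (hQ _ _ (h z)),
        mul_sum]
    · obtain ⟨z, hz⟩ := not_forall_not.mp h
      simp only [prod_eq_zero (f := fun z => P z (Y z)) (mem_univ z) hz, zero_mul, sum_const_zero]
  simp only [discreteKL, hlog]
  rw [sum_comm]
  exact sum_congr rfl fun z _ =>
    Fintype.sum_pi_prod_mul_apply P hP z fun y => Real.log (P z y / Q z y)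

section PowersetCard

variable {α M : Type*} [Fintype α] [DecidableEq α] [AddCommMonoid M] {a b : α}

theorem sum_filter_powersetCard_succ_mem_notMem (hab : a ≠ b) (m : ℕ) (f : Finset α → M) :
    ∑ S ∈ (powersetCard (m + 1) univ).filter (fun S => a ∈ S ∧ b ∉ S), f S =
      ∑ S ∈ (powersetCard m univ).filter (fun S => a ∉ S ∧ b ∉ S), f (insert a S) := by
  symm
  refine sum_nbij' (insert a) (fun S => S.erase a) ?_ ?_ ?_ ?_ fun _ _ => rfl
  · intro S hS
    simp only [mem_filter, mem_powersetCard_univ] at hS ⊢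
    obtain ⟨hcard, ha, hb⟩ := hS
    exact ⟨by rw [card_insert_of_notMem ha, hcard], mem_insert_self a S,
      by simp [hab.symm, hb]⟩
  · intro S hS
    simp only [mem_filter, mem_powersetCard_univ] at hS ⊢
    obtain ⟨hcard, ha, hb⟩ := hS
    exact ⟨by rw [card_erase_of_mem ha, hcard, Nat.add_sub_cancel], notMem_erase a S,
      fun h => hb (mem_of_mem_erase h)⟩
  · intro S hS
    exact erase_insert (mem_filter.mp hS).2.1
  · intro S hS
    exact insert_erase (mem_filter.mp hS).2.1

theorem sum_powersetCard_succ_eq_add_add (hab : a ≠ b) (m : ℕ) (f : Finset α → M) :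
    ∑ S ∈ powersetCard (m + 1) univ, f S =
      ∑ S ∈ (powersetCard (m + 1) univ).filter (fun S => a ∈ S ∧ b ∈ S), f S +
      ∑ S ∈ (powersetCard (m + 1) univ).filter (fun S => a ∉ S ∧ b ∉ S), f S +
      ∑ S ∈ (powersetCard m univ).filter (fun S => a ∉ S ∧ b ∉ S),
        (f (insert a S) + f (insert b S)) := by
  have hb : ∑ S ∈ (powersetCard (m + 1) univ).filter (fun S => a ∉ S ∧ b ∈ S), f S =
      ∑ S ∈ (powersetCard m univ).filter (fun S => a ∉ S ∧ b ∉ S), f (insert b S) := by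
    rw [filter_congr (p := fun S => a ∉ S ∧ b ∈ S) (q := fun S => b ∈ S ∧ a ∉ S)
        fun _ _ => and_comm, sum_filter_powersetCard_succ_mem_notMem hab.symm,
      filter_congr (p := fun S => b ∉ S ∧ a ∉ S) (q := fun S => a ∉ S ∧ b ∉ S)
        fun _ _ => and_comm]
  rw [← sum_filter_add_sum_filter_not _ (fun S => a ∈ S),
    ← sum_filter_add_sum_filter_not (filter (fun S => a ∈ S) _) (fun S => b ∈ S),
    ← sum_filter_add_sum_filter_not (filter (fun S => a ∉ S) _) (fun S => b ∈ S),
    filter_filter, filter_filter, filter_filter, filter_filter,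
    sum_filter_powersetCard_succ_mem_notMem hab, hb, sum_add_distrib]
  abel

end PowersetCard

section MenuObservation

variable {n : ℕ} (p : ℝ) (S : Finset (Fin n))

theorem sum_menuObsProb {w : Fin n → ℝ} (hS : ∑ j ∈ S, w j ≠ 0) :
    ∑ y, menuObsProb w p S y = 1 := by
  rw [Fintype.sum_option]
  simp only [menuObsProb]
  rw [sum_ite_mem, univ_inter, ← sum_div, ← mul_sum, mul_div_assoc, div_self hS, mul_one,
    sub_add_cancel]

theorem menuObsProb_ne_zero {w w' : Fin n → ℝ} (hw' : ∀ i ∈ S, w' i ≠ 0)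
    (hS' : ∑ j ∈ S, w' j ≠ 0) {y : Option (Fin n)} (h : menuObsProb w p S y ≠ 0) :
    menuObsProb w' p S y ≠ 0 := by
  cases y with
  | none => exact h
  | some i =>
    simp only [menuObsProb, ne_eq, ite_eq_right_iff, not_forall] at h ⊢
    obtain ⟨hi, hpw⟩ := h
    refine ⟨hi, div_ne_zero (mul_ne_zero ?_ (hw' i hi)) hS'⟩
    rintro rfl
    simp at hpw

theorem menuObsProb_congr {w w' : Fin n → ℝ} (h : ∀ i ∈ S, w i = w' i) :
    menuObsProb w p S = menuObsProb w' p S := by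
  funext y
  cases y with
  | none => rfl
  | some i =>
    simp only [menuObsProb, sum_congr rfl h]
    split_ifs with hi
    · rw [h i hi]
    · rfl

theorem discreteKL_menuObsProb {w w' : Fin n → ℝ} (hp : p ≠ 0) (hw : ∀ i, 0 < w i)
    (hw' : ∀ i, 0 < w' i) (hS : S.Nonempty) :
    discreteKL (menuObsProb w p S) (menuObsProb w' p S) =
      p / (∑ i ∈ S, w i) * ∑ i ∈ S, w i * Real.log (w i / w' i) +
        p * Real.log ((∑ i ∈ S, w' i) / ∑ i ∈ S, w i) := by
  have hW : 0 < ∑ i ∈ S, w i := sum_pos (fun i _ => hw i) hS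
  have hW' : 0 < ∑ i ∈ S, w' i := sum_pos (fun i _ => hw' i) hS
  have hchosen : ∀ i ∈ S, menuObsProb w p S (some i) *
      Real.log (menuObsProb w p S (some i) / menuObsProb w' p S (some i)) =
      p / (∑ j ∈ S, w j) * (w i * Real.log (w i / w' i)) +
        p / (∑ j ∈ S, w j) * w i * Real.log ((∑ j ∈ S, w' j) / ∑ j ∈ S, w j) := by
    intro i hi
    have hratio : p * w i / (∑ j ∈ S, w j) / (p * w' i / ∑ j ∈ S, w' j) =
        w i / w' i * ((∑ j ∈ S, w' j) / ∑ j ∈ S, w j) := by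
      field_simp [(hw' i).ne']
    simp only [menuObsProb, if_pos hi, hratio,
      Real.log_mul (div_pos (hw i) (hw' i)).ne' (div_pos hW' hW).ne']
    ring
  have hunchosen : ∀ i ∉ S, menuObsProb w p S (some i) *
      Real.log (menuObsProb w p S (some i) / menuObsProb w' p S (some i)) = 0 := by
    intro i hi
    simp only [menuObsProb, if_neg hi, zero_mul]
  have hnone : menuObsProb w p S none *
      Real.log (menuObsProb w p S none / menuObsProb w' p S none) = 0 := by
    simp only [menuObsProb, Real.log_div_self, mul_zero]
  rw [discreteKL, Fintype.sum_option, hnone, zero_add, ← sum_subset (subset_univ S)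
    fun i _ hi => hunchosen i hi, sum_congr rfl hchosen, sum_add_distrib, ← mul_sum,
    ← sum_mul, ← mul_sum, div_mul_cancel₀ p hW.ne']

end MenuObservation

theorem discreteKL_jointProb {n m R : ℕ} (hm : 0 < m) {w w' : Fin n → ℝ} (p : ℝ)
    (hw : ∀ i, 0 < w i) (hw' : ∀ i, 0 < w' i) :
    discreteKL (jointProb (m := m) (R := R) w p) (jointProb (m := m) (R := R) w' p) =
      R * ∑ S ∈ powersetCard m univ, discreteKL (menuObsProb w p S) (menuObsProb w' p S) := by
  have hne : ∀ S ∈ powersetCard m (univ : Finset (Fin n)), S.Nonempty := fun S hS =>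
    card_pos.mp ((mem_powersetCard_univ.mp hS).symm ▸ hm)
  have hsum : ∀ {v : Fin n → ℝ}, (∀ i, 0 < v i) →
      ∀ S ∈ powersetCard m (univ : Finset (Fin n)), ∑ i ∈ S, v i ≠ 0 :=
    fun hv S hS => (sum_pos (fun i _ => hv i) (hne S hS)).ne'
  refine (discreteKL_pi (fun z : powersetCard m univ × Fin R => menuObsProb w p z.1.val)
    (fun z => menuObsProb w' p z.1.val) (fun z => sum_menuObsProb p _ (hsum hw _ z.1.2))
    fun z _ => menuObsProb_ne_zero p _ (fun i _ => (hw' i).ne') (hsum hw' _ z.1.2)).trans ?_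
  simp only [Fintype.sum_prod_type_right,
    sum_coe_sort (powersetCard m univ) fun S => discreteKL (menuObsProb w p S) (menuObsProb w' p S),
    sum_const, card_univ, Fintype.card_fin, nsmul_eq_mul]

structure IsTopSwap {α : Type*} (v δ : ℝ) (a b : α) (wA wB : α → ℝ) : Prop where
  ne : a ≠ b
  left_a : wA a = v + δ
  left_b : wA b = v
  right_a : wB a = v
  right_b : wB b = v + δ
  right_eq_left : ∀ i, i ≠ a → i ≠ b → wB i = wA i

namespace IsTopSwap

section

variable {α : Type*} [DecidableEq α] {v δ : ℝ} {a b : α} {wA wB : α → ℝ}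

theorem right_pos (h : IsTopSwap v δ a b wA wB) (hw : ∀ i, 0 < wA i) (i : α) : 0 < wB i := by
  by_cases ha : i = a
  · rw [ha, h.right_a, ← h.left_b]; exact hw b
  by_cases hb : i = b
  · rw [hb, h.right_b, ← h.left_a]; exact hw a
  rw [h.right_eq_left i ha hb]; exact hw i

theorem sum_right (h : IsTopSwap v δ a b wA wB) (S : Finset α) :
    ∑ i ∈ S, wB i = ∑ i ∈ S, wA i + (if b ∈ S then δ else 0) - (if a ∈ S then δ else 0) := by
  have hpt : ∀ i, wB i = wA i + (if i = b then δ else 0) - (if i = a then δ else 0) := by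
    intro i
    by_cases ha : i = a
    · subst ha; simp [h.ne, h.left_a, h.right_a]
    by_cases hb : i = b
    · subst hb; simp [ha, h.left_b, h.right_b]
    simp [ha, hb, h.right_eq_left i ha hb]
  simp only [hpt, sum_sub_distrib, sum_add_distrib, sum_ite_eq']

theorem sum_mul_log_div (h : IsTopSwap v δ a b wA wB) (S : Finset α) :
    ∑ i ∈ S, wA i * Real.log (wA i / wB i) =
      (if a ∈ S then (v + δ) * Real.log ((v + δ) / v) else 0) -
        (if b ∈ S then v * Real.log ((v + δ) / v) else 0) := by
  have hpt : ∀ i, wA i * Real.log (wA i / wB i) =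
      (if i = a then (v + δ) * Real.log ((v + δ) / v) else 0) -
        (if i = b then v * Real.log ((v + δ) / v) else 0) := by
    intro i
    by_cases ha : i = a
    · subst ha; simp [h.ne, h.left_a, h.right_a]
    by_cases hb : i = b
    · subst hb
      rw [h.left_b, h.right_b, ← inv_div, Real.log_inv, if_neg ha, if_pos rfl]
      ring
    simp [ha, hb, h.right_eq_left i ha hb, Real.log_div_self]
  simp only [hpt, sum_sub_distrib, sum_ite_eq']

end

section

variable {n : ℕ} {p v δ : ℝ} {a b : Fin n} {wA wB : Fin n → ℝ}

theorem discreteKL_menuObsProb_of_mem_of_mem (h : IsTopSwap v δ a b wA wB) (hp : p ≠ 0)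
    (hw : ∀ i, 0 < wA i) {S : Finset (Fin n)} (ha : a ∈ S) (hb : b ∈ S) :
    discreteKL (menuObsProb wA p S) (menuObsProb wB p S) =
      p * Real.log ((v + δ) / v) * (δ / ∑ i ∈ S, wA i) := by
  have hW : 0 < ∑ i ∈ S, wA i := sum_pos (fun i _ => hw i) ⟨a, ha⟩
  rw [discreteKL_menuObsProb p S hp hw (h.right_pos hw) ⟨a, ha⟩, h.sum_mul_log_div,
    h.sum_right, if_pos ha, if_pos hb, if_pos ha, if_pos hb, add_sub_cancel_right,
    div_self hW.ne', Real.log_one]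
  ring

theorem discreteKL_menuObsProb_of_notMem_of_notMem (h : IsTopSwap v δ a b wA wB)
    {S : Finset (Fin n)} (ha : a ∉ S) (hb : b ∉ S) :
    discreteKL (menuObsProb wA p S) (menuObsProb wB p S) = 0 := by
  rw [menuObsProb_congr p S fun i hi => (h.right_eq_left i (ne_of_mem_of_not_mem hi ha)
    (ne_of_mem_of_not_mem hi hb)).symm, discreteKL_self]

theorem discreteKL_menuObsProb_insert_add_insert (h : IsTopSwap v δ a b wA wB) (hp : p ≠ 0)
    (hw : ∀ i, 0 < wA i) {S : Finset (Fin n)} (ha : a ∉ S) (hb : b ∉ S) :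
    discreteKL (menuObsProb wA p (insert a S)) (menuObsProb wB p (insert a S)) +
        discreteKL (menuObsProb wA p (insert b S)) (menuObsProb wB p (insert b S)) =
      p * Real.log ((v + δ) / v) *
        ((v + δ) / ((∑ i ∈ S, wA i) + v + δ) - v / ((∑ i ∈ S, wA i) + v)) := by
  rw [discreteKL_menuObsProb p _ hp hw (h.right_pos hw) (insert_nonempty a S),
    discreteKL_menuObsProb p _ hp hw (h.right_pos hw) (insert_nonempty b S),
    h.sum_mul_log_div, h.sum_mul_log_div, h.sum_right, h.sum_right, sum_insert ha, sum_insert hb,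
    h.left_a, h.left_b]
  simp only [mem_insert_self, if_true, mem_insert, h.ne, h.ne.symm, ha, hb, or_false, if_false]
  rw [show v + δ + ∑ i ∈ S, wA i + 0 - δ = v + ∑ i ∈ S, wA i by ring,
    show v + ∑ i ∈ S, wA i + δ - 0 = v + δ + ∑ i ∈ S, wA i by ring,
    ← inv_div (v + δ + ∑ i ∈ S, wA i) (v + ∑ i ∈ S, wA i), Real.log_inv]
  ring

theorem sum_discreteKL_menuObsProb (h : IsTopSwap v δ a b wA wB) (hp : p ≠ 0)
    (hw : ∀ i, 0 < wA i) (m : ℕ) :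
    ∑ S ∈ powersetCard (m + 1) univ, discreteKL (menuObsProb wA p S) (menuObsProb wB p S) =
      p * Real.log ((v + δ) / v) *
        (∑ S ∈ (powersetCard (m + 1) univ).filter (fun S => a ∈ S ∧ b ∈ S),
            δ / ∑ i ∈ S, wA i +
          ∑ S ∈ (powersetCard m univ).filter (fun S => a ∉ S ∧ b ∉ S),
            ((v + δ) / ((∑ i ∈ S, wA i) + v + δ) - v / ((∑ i ∈ S, wA i) + v))) := by
  rw [sum_powersetCard_succ_eq_add_add h.ne, mul_add, mul_sum, mul_sum,
    sum_congr rfl fun S hS => h.discreteKL_menuObsProb_of_mem_of_mem hp hw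
      (mem_filter.mp hS).2.1 (mem_filter.mp hS).2.2,
    sum_eq_zero fun S hS => h.discreteKL_menuObsProb_of_notMem_of_notMem
      (mem_filter.mp hS).2.1 (mem_filter.mp hS).2.2, add_zero,
    sum_congr rfl fun S hS => h.discreteKL_menuObsProb_insert_add_insert hp hw
      (mem_filter.mp hS).2.1 (mem_filter.mp hS).2.2]

end

end IsTopSwap

open Finset in
theorem kl_full_observation_general (n m R : ℕ) (hm : 2 ≤ m) (hmn : m ≤ n)
    (p v δ : ℝ) (hp0 : 0 < p) (hv : 0 < v) (hδ : 0 < δ)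
    (T0 : Finset (Fin n))
    (a b : Fin n) (hab : a ≠ b) (haT : a ∉ T0) (hbT : b ∉ T0)
    (wA wB : Fin n → ℝ)
    (hwA : ∀ i, wA i = if i ∈ insert a T0 then v + δ else v)
    (hwB : ∀ i, wB i = if i ∈ insert b T0 then v + δ else v)
    (Δ : ℝ)
    (hΔ : Δ = (1 / ((n - 1).choose (m - 1) : ℝ)) *
      ((∑ S ∈ (Finset.powersetCard m (Finset.univ : Finset (Fin n))).filter
            (fun S => a ∈ S ∧ b ∈ S), δ / ∑ i ∈ S, wA i) +
        ∑ S' ∈ (Finset.powersetCard (m - 1) (Finset.univ : Finset (Fin n))).filter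
            (fun S' => a ∉ S' ∧ b ∉ S'),
          ((v + δ) / ((∑ i ∈ S', wA i) + v + δ) - v / ((∑ i ∈ S', wA i) + v)))) :
    ∑ Y : {S : Finset (Fin n) // S ∈ Finset.powersetCard m Finset.univ} × Fin R →
        Option (Fin n),
      jointProb (m := m) (R := R) wA p Y *
        Real.log (jointProb (m := m) (R := R) wA p Y / jointProb (m := m) (R := R) wB p Y) =
      p * R * Real.log ((v + δ) / v) * ((n - 1).choose (m - 1) : ℝ) * Δ := by
  obtain ⟨k, rfl⟩ : ∃ k, m = k + 1 := ⟨m - 1, by omega⟩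
  have hswap : IsTopSwap v δ a b wA wB :=
    { ne := hab
      left_a := by simp [hwA]
      left_b := by simp [hwA, hab.symm, hbT]
      right_a := by simp [hwB, hab, haT]
      right_b := by simp [hwB]
      right_eq_left := fun i ha hb => by simp [hwA, hwB, ha, hb] }
  have hw : ∀ i, 0 < wA i := fun i => by rw [hwA i]; split_ifs <;> positivity
  have hC : ((n - 1).choose k : ℝ) ≠ 0 := by exact_mod_cast (Nat.choose_pos (by omega)).ne'
  change discreteKL (jointProb wA p) (jointProb wB p) = _
  rw [discreteKL_jointProb k.succ_pos p hw (hswap.right_pos hw),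
    hswap.sum_discreteKL_menuObsProb hp0.ne' hw, hΔ, Nat.add_sub_cancel]
  field_simp

open Finset in
theorem kl_full_observation (n m K R : ℕ) (hm : 2 ≤ m) (hmn : m ≤ n) (hR : 1 ≤ R)
    (p v δ : ℝ) (hp0 : 0 < p) (hp1 : p ≤ 1) (hv : 0 < v) (hδ : 0 < δ)
    (T0 : Finset (Fin n)) (hT0 : T0.card = K - 1)
    (a b : Fin n) (hab : a ≠ b) (haT : a ∉ T0) (hbT : b ∉ T0)
    (wA wB : Fin n → ℝ)
    (hwA : ∀ i, wA i = if i ∈ insert a T0 then v + δ else v)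
    (hwB : ∀ i, wB i = if i ∈ insert b T0 then v + δ else v)
    (Δ : ℝ)
    (hΔ : Δ = (1 / ((n - 1).choose (m - 1) : ℝ)) *
      ((∑ S ∈ (Finset.powersetCard m (Finset.univ : Finset (Fin n))).filter
            (fun S => a ∈ S ∧ b ∈ S), δ / ∑ i ∈ S, wA i) +
        ∑ S' ∈ (Finset.powersetCard (m - 1) (Finset.univ : Finset (Fin n))).filter
            (fun S' => a ∉ S' ∧ b ∉ S'),
          ((v + δ) / ((∑ i ∈ S', wA i) + v + δ) - v / ((∑ i ∈ S', wA i) + v)))) :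
    ∑ Y : {S : Finset (Fin n) // S ∈ Finset.powersetCard m Finset.univ} × Fin R →
        Option (Fin n),
      jointProb (m := m) (R := R) wA p Y *
        Real.log (jointProb (m := m) (R := R) wA p Y / jointProb (m := m) (R := R) wB p Y) =
      p * R * Real.log ((v + δ) / v) * ((n - 1).choose (m - 1) : ℝ) * Δ :=
  kl_full_observation_general n m R hm hmn p v δ hp0 hv hδ T0 a b hab haT hbT wA wB hwA hwB Δ hΔ
end
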